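/- Let (A, μ, ε, α) be a Hom-associative color algebra. Then (A, μ, {·,·}, ε, α) with {x,y} = μ(x,y) − ε(x,y)μ(y,x) is a Hom-Poisson color algebra: (A, {·,·}, ε, α) is a Hom-Lie color algebra and the color Hom-Leibniz identity {α(x), μ(y,z)} = μ({x,y}, α(z)) + ε(x,y)μ(α(y), {x,z}) holds. -/
import Mathlib


/-- The ε-commutator bracket {x,y} = μ(x,y) − ε(x,y) μ(y,x) for x, y of
degrees a, b. -/
def colorBr {K G A : Type*} [Field K] [AddCommGroup G] [AddCommGroup A] [Module K A]
    (ε : G → G → K) (μ : A →ₗ[K] A →ₗ[K] A) (a b : G) (x y : A) : A :=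
  μ x y - ε a b • μ y x

/-- a Hom-associative color algebra gives a Hom-Poisson color algebra
via {x,y} = μ(x,y) − ε(x,y)μ(y,x): the bracket is ε-skew, satisfies the ε-Hom-Jacobi
identity, and the color Hom-Leibniz identity. -/
theorem stmt_13 {K G A : Type*} [Field K] [AddCommGroup G] [AddCommGroup A] [Module K A]
    (ε : G → G → K) (𝒜 : G → Submodule K A)
    (hεs : ∀ a b, ε a b * ε b a = 1)
    (hεr : ∀ a b c, ε a (b + c) = ε a b * ε a c)
    (hεl : ∀ a b c, ε (a + b) c = ε a c * ε b c)
    (μ : A →ₗ[K] A →ₗ[K] A) (α : A →ₗ[K] A)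
    (hμ : ∀ a b : G, ∀ x ∈ 𝒜 a, ∀ y ∈ 𝒜 b, μ x y ∈ 𝒜 (a + b))
    (hα : ∀ a : G, ∀ x ∈ 𝒜 a, α x ∈ 𝒜 a)
    (hassoc : ∀ a b c : G, ∀ x ∈ 𝒜 a, ∀ y ∈ 𝒜 b, ∀ z ∈ 𝒜 c,
      μ (α x) (μ y z) = μ (μ x y) (α z)) :
    -- ε-skew-symmetry
    (∀ a b : G, ∀ x ∈ 𝒜 a, ∀ y ∈ 𝒜 b,
      colorBr ε μ a b x y = -(ε a b • colorBr ε μ b a y x)) ∧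
    -- ε-Hom-Jacobi identity
    (∀ a b c : G, ∀ x ∈ 𝒜 a, ∀ y ∈ 𝒜 b, ∀ z ∈ 𝒜 c,
      ε c a • colorBr ε μ a (b + c) (α x) (colorBr ε μ b c y z)
        + ε a b • colorBr ε μ b (c + a) (α y) (colorBr ε μ c a z x)
        + ε b c • colorBr ε μ c (a + b) (α z) (colorBr ε μ a b x y) = 0) ∧
    -- color Hom-Leibniz identity
    (∀ a b c : G, ∀ x ∈ 𝒜 a, ∀ y ∈ 𝒜 b, ∀ z ∈ 𝒜 c,
      colorBr ε μ a (b + c) (α x) (μ y z)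
        = μ (colorBr ε μ a b x y) (α z) + ε a b • μ (α y) (colorBr ε μ a c x z)) := by
  refine ⟨?_, ?_, ?_⟩
  · intro a b x hx y hy
    unfold colorBr
    match_scalars
    · linear_combination -hεs a b
    · ring
  · intro a b c x hx y hy z hz
    have h1 : μ (α x) (μ y z) = μ (μ x y) (α z) := hassoc a b c x hx y hy z hz
    have h2 : μ (α x) (μ z y) = μ (μ x z) (α y) := hassoc a c b x hx z hz y hy
    have h3 : μ (α y) (μ z x) = μ (μ y z) (α x) := hassoc b c a y hy z hz x hx
    have h4 : μ (α y) (μ x z) = μ (μ y x) (α z) := hassoc b a c y hy x hx z hz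
    have h5 : μ (α z) (μ x y) = μ (μ z x) (α y) := hassoc c a b z hz x hx y hy
    have h6 : μ (α z) (μ y x) = μ (μ z y) (α x) := hassoc c b a z hz y hy x hx
    unfold colorBr
    simp only [map_sub, map_smul, LinearMap.sub_apply, LinearMap.smul_apply,
      smul_sub, hεr, h1, h2, h3, h4, h5, h6]
    match_scalars <;>
      first
        | ring1
        | linear_combination (-(ε c a)) * hεs b c
        | linear_combination (ε c a * ε b c) * hεs a b
        | linear_combination (-(ε a b)) * hεs c a
        | linear_combination (ε a b * ε b c) * hεs c a
        | linear_combination (ε a b * ε c a) * hεs b c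
        | linear_combination (-(ε b c)) * hεs a b
  · intro a b c x hx y hy z hz
    have h1 : μ (α x) (μ y z) = μ (μ x y) (α z) := hassoc a b c x hx y hy z hz
    have h3 : μ (α y) (μ z x) = μ (μ y z) (α x) := hassoc b c a y hy z hz x hx
    have h4 : μ (α y) (μ x z) = μ (μ y x) (α z) := hassoc b a c y hy x hx z hz
    unfold colorBr
    simp only [map_sub, map_smul, LinearMap.sub_apply, LinearMap.smul_apply,
      smul_sub, hεr, h1, h3, h4]
    match_scalars <;> ring
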